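/- Let W be a matrix weight of size N on a finite interval (a,b), let {P_n} be its sequence of monic orthogonal polynomials, and let M₀ = ∫_a^b W(x) dx be its zeroth moment. Then C_ℝ(W) = {T ∈ Mat_N(ℂ) : T W(x) = W(x) T* for a.e. x} coincides with the set { T ∈ Mat_N(ℂ) : T M₀ = M₀ T* and T P_n(x) = P_n(x) T for all n ∈ ℕ and all x }. -/

import Mathlib

open MeasureTheory Matrix
open scoped ComplexOrder

noncomputable section

/-- The set of real points strictly between the extended-real endpoints `a` and `b`. -/
def weightSupport (a b : EReal) : Set ℝ := {x : ℝ | a < (x : EReal) ∧ (x : EReal) < b}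

variable {I : Type} [Fintype I] [DecidableEq I]
variable {I' : Type} [Fintype I'] [DecidableEq I']

/-- Entrywise integral of a matrix-valued function over a set. -/
def matIntegral (S : Set ℝ) (F : ℝ → Matrix I I ℂ) : Matrix I I ℂ :=
  Matrix.of fun i j => ∫ x in S, F x i j

/-- `W` is a matrix weight on the (nondegenerate) interval `(a,b)`. -/
def IsMatrixWeight (a b : EReal) (W : ℝ → Matrix I I ℂ) : Prop :=
  a < b ∧
  (∀ x ∈ weightSupport a b, (W x).PosSemidef) ∧
  (∀ᵐ x : ℝ ∂(volume.restrict (weightSupport a b)), (W x).PosDef) ∧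
  (∀ n : ℕ, ∀ i j, IntegrableOn (fun x : ℝ => (x : ℂ) ^ n * W x i j) (weightSupport a b))

/-- Equivalence of matrix weights: `W' = M W M*` for a nonsingular `M`. -/
def WeightEquiv (a b : EReal) (W : ℝ → Matrix I I ℂ) (W' : ℝ → Matrix I' I' ℂ) : Prop :=
  ∃ (M : Matrix I' I ℂ) (M' : Matrix I I' ℂ), M * M' = 1 ∧ M' * M = 1 ∧
    ∀ x ∈ weightSupport a b, W' x = M * W x * Mᴴ

/-- Unitary equivalence of matrix weights. -/
def UnitaryWeightEquiv (a b : EReal) (W : ℝ → Matrix I I ℂ) (W' : ℝ → Matrix I' I' ℂ) : Prop :=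
  ∃ M : Matrix I' I ℂ, M * Mᴴ = 1 ∧ Mᴴ * M = 1 ∧
    ∀ x ∈ weightSupport a b, W' x = M * W x * Mᴴ

/-- `W` reduces: it is equivalent to a direct sum of two matrix weights of smaller size. -/
def Reduces (a b : EReal) (W : ℝ → Matrix I I ℂ) : Prop :=
  ∃ (N₁ N₂ : ℕ) (W₁ : ℝ → Matrix (Fin N₁) (Fin N₁) ℂ) (W₂ : ℝ → Matrix (Fin N₂) (Fin N₂) ℂ),
    0 < N₁ ∧ 0 < N₂ ∧ N₁ + N₂ = Fintype.card I ∧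
    IsMatrixWeight a b W₁ ∧ IsMatrixWeight a b W₂ ∧
    WeightEquiv a b W (fun x => Matrix.fromBlocks (W₁ x) 0 0 (W₂ x))

/-- The real vector space `C_ℝ` of a matrix weight. -/
def CR (a b : EReal) (W : ℝ → Matrix I I ℂ) : Set (Matrix I I ℂ) :=
  {T | ∀ᵐ x ∂(volume.restrict (weightSupport a b)), T * W x = W x * Tᴴ}

/-- Evaluation of a matrix polynomial at a real point. -/
def polyEval (p : Polynomial (Matrix I I ℂ)) (x : ℝ) : Matrix I I ℂ :=
  p.eval ((x : ℂ) • (1 : Matrix I I ℂ))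

/-- A sequence of orthogonal polynomials with respect to `W`:  `Q n` has degree `n` with
nonsingular leading coefficient, and distinct members are orthogonal. -/
def IsOPS (a b : EReal) (W : ℝ → Matrix I I ℂ) (Q : ℕ → Polynomial (Matrix I I ℂ)) : Prop :=
  (∀ n, (Q n).natDegree = n ∧ IsUnit ((Q n).coeff n)) ∧
  ∀ n m, n ≠ m →
    matIntegral (weightSupport a b) (fun x => polyEval (Q n) x * W x * (polyEval (Q m) x)ᴴ) = 0

/-- The sequence of monic orthogonal polynomials with respect to `W`. -/
def IsMonicOPS (a b : EReal) (W : ℝ → Matrix I I ℂ) (P : ℕ → Polynomial (Matrix I I ℂ)) : Prop :=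
  (∀ n, (P n).Monic ∧ (P n).natDegree = n) ∧
  ∀ n m, n ≠ m →
    matIntegral (weightSupport a b) (fun x => polyEval (P n) x * W x * (polyEval (P m) x)ᴴ) = 0

end

/-!
If `T W = W T*` a.e., integrating gives `T M₀ = M₀ T*`, and `R = T Pₙ - Pₙ T` has degree `< n`
because `Pₙ` is monic. Moving `T` across the inner product `⟨p, q⟩ = ∫ p W q*` gives
`⟨R, R⟩ = T ⟨Pₙ, R⟩ - ⟨Pₙ, R T⟩ = 0` by orthogonality, and `⟨R, R⟩ = 0` forces `R = 0` because
`W` is positive definite almost everywhere.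

Conversely, if `T` commutes with every `Pₙ(x)` and `T M₀ = M₀ T*`, then
`∫ Pₗ (T W - W T*) = T ⟨Pₗ, 1⟩ - ⟨Pₗ, 1⟩ T*` vanishes: for `l = 0` this is the condition on `M₀`,
for `l > 0` it is orthogonality to `P₀ = 1`. The `Pₗ` span all polynomials, so every moment of
`T W - W T*` vanishes, and by Weierstrass approximation a function on a bounded interval with
vanishing moments is zero almost everywhere.
-/

open Polynomial

section Moments

variable {E : Type*} [NormedAddCommGroup E] [NormedSpace ℝ E] {a b : ℝ} {g : ℝ → E}

lemma setIntegral_eval_smul_eq_zero (hg : IntegrableOn g (Set.Ioo a b))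
    (hmom : ∀ n : ℕ, ∫ x in Set.Ioo a b, x ^ n • g x = 0) (p : ℝ[X]) :
    ∫ x in Set.Ioo a b, p.eval x • g x = 0 := by
  have hint (n : ℕ) : IntegrableOn (fun x => (p.coeff n * x ^ n) • g x) (Set.Ioo a b) :=
    hg.continuousOn_smul_of_subset (by fun_prop) isCompact_Icc measurableSet_Ioo
      Set.Ioo_subset_Icc_self
  simp_rw [eval_eq_sum_range, Finset.sum_smul]
  rw [integral_finsetSum _ fun n _ => hint n]
  refine Finset.sum_eq_zero fun n _ => ?_
  simp_rw [mul_smul, integral_smul, hmom, smul_zero]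

lemma setIntegral_smul_eq_zero_of_forall_polynomial (hg : IntegrableOn g (Set.Ioo a b))
    (hpoly : ∀ p : ℝ[X], ∫ x in Set.Ioo a b, p.eval x • g x = 0) {φ : ℝ → ℝ}
    (hφ : Continuous φ) : ∫ x in Set.Ioo a b, φ x • g x = 0 := by
  have hφg : IntegrableOn (fun x => φ x • g x) (Set.Ioo a b) :=
    hg.continuousOn_smul_of_subset hφ.continuousOn isCompact_Icc measurableSet_Ioo
      Set.Ioo_subset_Icc_self
  set c := ∫ x in Set.Ioo a b, ‖g x‖
  have hbound (ε : ℝ) (hε : 0 < ε) : ‖∫ x in Set.Ioo a b, φ x • g x‖ ≤ ε * c := by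
    obtain ⟨p, hp⟩ := exists_polynomial_near_of_continuousOn a b φ hφ.continuousOn ε hε
    have hpg : IntegrableOn (fun x => p.eval x • g x) (Set.Ioo a b) :=
      hg.continuousOn_smul_of_subset p.continuous.continuousOn isCompact_Icc
        measurableSet_Ioo Set.Ioo_subset_Icc_self
    calc ‖∫ x in Set.Ioo a b, φ x • g x‖
        = ‖∫ x in Set.Ioo a b, (φ x - p.eval x) • g x‖ := by
          simp_rw [sub_smul]
          rw [integral_sub hφg hpg, hpoly, sub_zero]
      _ ≤ ∫ x in Set.Ioo a b, ε * ‖g x‖ := by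
          refine norm_integral_le_of_norm_le (hg.norm.const_mul ε) ?_
          refine ae_restrict_of_forall_mem measurableSet_Ioo fun x hx => ?_
          rw [norm_smul, Real.norm_eq_abs, abs_sub_comm]
          exact mul_le_mul_of_nonneg_right (hp x (Set.Ioo_subset_Icc_self hx)).le
            (norm_nonneg _)
      _ = ε * c := integral_const_mul ε _
  have hc : 0 ≤ c := integral_nonneg fun x => norm_nonneg _
  by_contra hne
  have hpos := norm_pos_iff.2 hne
  have := hbound (‖∫ x in Set.Ioo a b, φ x • g x‖ / (c + 1)) (by positivity)
  rw [div_mul_eq_mul_div, le_div_iff₀ (by positivity)] at this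
  nlinarith

lemma ae_eq_zero_of_forall_moment_eq_zero [CompleteSpace E] (hg : IntegrableOn g (Set.Ioo a b))
    (hmom : ∀ n : ℕ, ∫ x in Set.Ioo a b, x ^ n • g x = 0) :
    ∀ᵐ x ∂volume.restrict (Set.Ioo a b), g x = 0 := by
  have hind : ∀ᵐ x, (Set.Ioo a b).indicator g x = 0 := by
    refine ae_eq_zero_of_integral_contDiff_smul_eq_zero
      ((integrable_indicator_iff measurableSet_Ioo).2 hg).locallyIntegrable fun φ hφ _ => ?_
    simp_rw [← Set.indicator_smul_apply]
    rw [integral_indicator measurableSet_Ioo]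
    exact setIntegral_smul_eq_zero_of_forall_polynomial hg
      (setIntegral_eval_smul_eq_zero hg hmom) hφ.continuous
  filter_upwards [ae_restrict_of_ae hind, ae_restrict_mem measurableSet_Ioo] with x hx hmem
  rwa [Set.indicator_of_mem hmem] at hx

end Moments

lemma Polynomial.eq_zero_of_ae_eval_eq_zero {a b : ℝ} (hab : a < b) {ψ : ℂ[X]}
    (h : ∀ᵐ x : ℝ ∂volume.restrict (Set.Ioo a b), ψ.eval (x : ℂ) = 0) : ψ = 0 := by
  by_contra hψ
  have hroots : {x : ℝ | ψ.IsRoot x}.Finite :=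
    (finite_setOfPred_isRoot hψ).preimage Complex.ofReal_injective.injOn
  have hne : ∀ᵐ x : ℝ ∂volume.restrict (Set.Ioo a b), ψ.eval (x : ℂ) ≠ 0 :=
    ae_restrict_of_ae (measure_eq_zero_iff_ae_notMem.1 (hroots.measure_zero volume))
  have := ae_restrict_neBot.2 (by simpa using hab : volume (Set.Ioo a b) ≠ 0)
  obtain ⟨x, hx, hx'⟩ := (h.and hne).exists
  exact hx' hx

lemma ae_eq_zero_of_integral_dotProduct_mulVec_eq_zero {α n : Type*} [MeasurableSpace α]
    [Fintype n] {μ : Measure α} {W : α → Matrix n n ℂ} {w : α → n → ℂ}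
    (hW : ∀ᵐ x ∂μ, (W x).PosDef)
    (hint : Integrable (fun x => star (w x) ⬝ᵥ W x *ᵥ w x) μ)
    (h : ∫ x, star (w x) ⬝ᵥ W x *ᵥ w x ∂μ = 0) : ∀ᵐ x ∂μ, w x = 0 := by
  have hre : ∫ x, (star (w x) ⬝ᵥ W x *ᵥ w x).re ∂μ = 0 := by
    simpa [h] using integral_re hint
  have hnonneg : 0 ≤ᵐ[μ] fun x => (star (w x) ⬝ᵥ W x *ᵥ w x).re := by
    filter_upwards [hW] with x hx
    exact (Complex.nonneg_iff.1 (hx.posSemidef.dotProduct_mulVec_nonneg (w x))).1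
  filter_upwards [hW, (integral_eq_zero_iff_of_nonneg_ae hnonneg hint.re).1 hre]
    with x hx hx0
  by_contra hw
  exact (Complex.pos_iff.1 (hx.dotProduct_mulVec_pos hw)).1.ne' hx0

section MatIntegral

variable {I : Type} {S : Set ℝ} {F G : ℝ → Matrix I I ℂ}

@[simp]
lemma matIntegral_apply (i j : I) : matIntegral S F i j = ∫ x in S, F x i j := rfl

lemma matIntegral_congr_ae (h : ∀ᵐ x ∂volume.restrict S, F x = G x) :
    matIntegral S F = matIntegral S G := by
  ext i j
  exact integral_congr_ae (h.mono fun x hx => by simp only [hx])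

lemma matIntegral_sub (hF : ∀ i j, IntegrableOn (fun x => F x i j) S)
    (hG : ∀ i j, IntegrableOn (fun x => G x i j) S) :
    matIntegral S (fun x => F x - G x) = matIntegral S F - matIntegral S G := by
  ext i j
  exact integral_sub (hF i j) (hG i j)

lemma matIntegral_finsetSum {ι : Type*} (s : Finset ι) {F : ι → ℝ → Matrix I I ℂ}
    (hF : ∀ k ∈ s, ∀ i j, IntegrableOn (fun x => F k x i j) S) :
    matIntegral S (fun x => ∑ k ∈ s, F k x) = ∑ k ∈ s, matIntegral S (F k) := by
  ext i j
  simp only [matIntegral_apply, Matrix.sum_apply]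
  exact integral_finsetSum s fun k hk => hF k hk i j

lemma matIntegral_const_mul [Fintype I] (hF : ∀ i j, IntegrableOn (fun x => F x i j) S)
    (A : Matrix I I ℂ) :
    matIntegral S (fun x => A * F x) = A * matIntegral S F := by
  ext i j
  simp only [matIntegral_apply, Matrix.mul_apply]
  rw [integral_finsetSum _ fun k _ => (hF k j).const_mul _]
  simp_rw [integral_const_mul]

lemma matIntegral_mul_const [Fintype I] (hF : ∀ i j, IntegrableOn (fun x => F x i j) S)
    (A : Matrix I I ℂ) :
    matIntegral S (fun x => F x * A) = matIntegral S F * A := by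
  ext i j
  simp only [matIntegral_apply, Matrix.mul_apply]
  rw [integral_finsetSum _ fun k _ => (hF i k).mul_const _]
  simp_rw [integral_mul_const]

lemma integrableOn_mul_mul_apply [Fintype I] {a b : ℝ} {W : ℝ → Matrix I I ℂ}
    (hW : ∀ i j, IntegrableOn (fun x => W x i j) (Set.Ioo a b))
    {A B : ℝ → Matrix I I ℂ} (hA : Continuous A) (hB : Continuous B) (i j : I) :
    IntegrableOn (fun x => (A x * W x * B x) i j) (Set.Ioo a b) := by
  simp only [Matrix.mul_apply, Finset.sum_mul]
  refine integrable_finsetSum _ fun l _ => integrable_finsetSum _ fun k _ => ?_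
  exact ((hW k l).continuousOn_mul_of_subset (by fun_prop) isCompact_Icc measurableSet_Ioo
    Set.Ioo_subset_Icc_self).mul_continuousOn_of_subset (by fun_prop) measurableSet_Ioo
    isCompact_Icc Set.Ioo_subset_Icc_self

end MatIntegral

section PolyEval

variable {I : Type} [Fintype I] [DecidableEq I]

lemma polyEval_apply (p : Polynomial (Matrix I I ℂ)) (x : ℝ) (i j : I) :
    polyEval p x i j = ((matPolyEquiv.symm p) i j).eval (x : ℂ) := by
  rw [← matPolyEquiv_eval, AlgEquiv.apply_symm_apply, polyEval, Matrix.scalar_apply,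
    Matrix.smul_one_eq_diagonal]

lemma continuous_polyEval (p : Polynomial (Matrix I I ℂ)) : Continuous (polyEval p) :=
  p.continuous.comp (by fun_prop)

@[simp]
lemma polyEval_mul (p q : Polynomial (Matrix I I ℂ)) (x : ℝ) :
    polyEval (p * q) x = polyEval p x * polyEval q x :=
  eval₂_mul_noncomm _ _ fun _ => (Commute.one_right _).smul_right _

@[simp]
lemma polyEval_sub (p q : Polynomial (Matrix I I ℂ)) (x : ℝ) :
    polyEval (p - q) x = polyEval p x - polyEval q x := eval_sub _ _ _

@[simp]
lemma polyEval_C (A : Matrix I I ℂ) (x : ℝ) : polyEval (C A) x = A := eval_C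

@[simp]
lemma polyEval_zero (x : ℝ) : polyEval (0 : Polynomial (Matrix I I ℂ)) x = 0 := eval_zero

@[simp]
lemma polyEval_one (x : ℝ) : polyEval (1 : Polynomial (Matrix I I ℂ)) x = 1 := eval_one

@[simp]
lemma polyEval_monomial (n : ℕ) (A : Matrix I I ℂ) (x : ℝ) :
    polyEval (monomial n A) x = (x : ℂ) ^ n • A := by
  rw [polyEval, eval_monomial, _root_.smul_pow, one_pow, mul_smul_comm, mul_one]

@[simp]
lemma polyEval_finsetSum {ι : Type*} (s : Finset ι) (p : ι → Polynomial (Matrix I I ℂ))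
    (x : ℝ) : polyEval (∑ k ∈ s, p k) x = ∑ k ∈ s, polyEval (p k) x :=
  eval_finsetSum _ _ _

end PolyEval

section PolyInner

variable {I : Type} [Fintype I] [DecidableEq I] {a b : ℝ} {W : ℝ → Matrix I I ℂ}

noncomputable def polyInner (S : Set ℝ) (W : ℝ → Matrix I I ℂ)
    (p q : Polynomial (Matrix I I ℂ)) : Matrix I I ℂ :=
  matIntegral S fun x => polyEval p x * W x * (polyEval q x)ᴴ

lemma polyInner_mul_C_of_ae {T : Matrix I I ℂ}
    (hT : ∀ᵐ x ∂volume.restrict (Set.Ioo a b), T * W x = W x * Tᴴ)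
    (p q : Polynomial (Matrix I I ℂ)) :
    polyInner (Set.Ioo a b) W (p * C T) q = polyInner (Set.Ioo a b) W p (q * C T) := by
  refine matIntegral_congr_ae (hT.mono fun x hx => ?_)
  simp only [polyEval_mul, polyEval_C, Matrix.conjTranspose_mul, mul_assoc, hx]

variable (hW : ∀ i j, IntegrableOn (fun x => W x i j) (Set.Ioo a b))
include hW

lemma integrableOn_polyInner_integrand (p q : Polynomial (Matrix I I ℂ)) (i j : I) :
    IntegrableOn (fun x => (polyEval p x * W x * (polyEval q x)ᴴ) i j) (Set.Ioo a b) :=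
  integrableOn_mul_mul_apply hW (continuous_polyEval p)
    (continuous_polyEval q).matrix_conjTranspose i j

lemma polyInner_sub_left (p p' q : Polynomial (Matrix I I ℂ)) :
    polyInner (Set.Ioo a b) W (p - p') q =
      polyInner (Set.Ioo a b) W p q - polyInner (Set.Ioo a b) W p' q := by
  simp only [polyInner, polyEval_sub, sub_mul]
  exact matIntegral_sub (integrableOn_polyInner_integrand hW p q)
    (integrableOn_polyInner_integrand hW p' q)

lemma polyInner_C_mul_left (A : Matrix I I ℂ) (p q : Polynomial (Matrix I I ℂ)) :
    polyInner (Set.Ioo a b) W (C A * p) q = A * polyInner (Set.Ioo a b) W p q := by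
  simp only [polyInner, polyEval_mul, polyEval_C, mul_assoc]
  simpa only [mul_assoc] using
    matIntegral_const_mul (integrableOn_polyInner_integrand hW p q) A

lemma polyInner_C_mul_right (A : Matrix I I ℂ) (p q : Polynomial (Matrix I I ℂ)) :
    polyInner (Set.Ioo a b) W p (C A * q) = polyInner (Set.Ioo a b) W p q * Aᴴ := by
  simp only [polyInner, polyEval_mul, polyEval_C, Matrix.conjTranspose_mul, ← mul_assoc]
  exact matIntegral_mul_const (integrableOn_polyInner_integrand hW p q) Aᴴ

lemma polyInner_finsetSum_left {ι : Type*} (s : Finset ι) (p : ι → Polynomial (Matrix I I ℂ))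
    (q : Polynomial (Matrix I I ℂ)) :
    polyInner (Set.Ioo a b) W (∑ k ∈ s, p k) q =
      ∑ k ∈ s, polyInner (Set.Ioo a b) W (p k) q := by
  simp only [polyInner, polyEval_finsetSum, Finset.sum_mul]
  exact matIntegral_finsetSum s fun k _ => integrableOn_polyInner_integrand hW (p k) q

lemma polyInner_finsetSum_right {ι : Type*} (s : Finset ι) (p : Polynomial (Matrix I I ℂ))
    (q : ι → Polynomial (Matrix I I ℂ)) :
    polyInner (Set.Ioo a b) W p (∑ k ∈ s, q k) =
      ∑ k ∈ s, polyInner (Set.Ioo a b) W p (q k) := by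
  simp only [polyInner, polyEval_finsetSum, Matrix.conjTranspose_sum, Finset.mul_sum]
  exact matIntegral_finsetSum s fun k _ => integrableOn_polyInner_integrand hW p (q k)

lemma polyInner_mul_C_of_commute {T : Matrix I I ℂ} {p : Polynomial (Matrix I I ℂ)}
    (hT : ∀ x, T * polyEval p x = polyEval p x * T) (q : Polynomial (Matrix I I ℂ)) :
    polyInner (Set.Ioo a b) W (p * C T) q = T * polyInner (Set.Ioo a b) W p q := by
  rw [← polyInner_C_mul_left hW]
  exact matIntegral_congr_ae (ae_of_all _ fun x => by simp only [polyEval_mul, polyEval_C, hT])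

end PolyInner

namespace Polynomial

variable {R : Type*} [Ring R]

lemma coeff_eq_one_of_monic_of_natDegree_eq {p : R[X]} {n : ℕ} (hp : p.Monic)
    (hn : p.natDegree = n) : p.coeff n = 1 :=
  hn ▸ hp.coeff_natDegree

lemma degree_C_mul_sub_mul_C_lt {p : R[X]} {n : ℕ} (hp : p.Monic) (hn : p.natDegree = n)
    (a : R) : (C a * p - p * C a).degree < n := by
  rw [degree_lt_iff_coeff_zero]
  intro m hm
  rw [coeff_sub, coeff_C_mul, coeff_mul_C]
  rcases hm.eq_or_lt with rfl | hlt
  · rw [coeff_eq_one_of_monic_of_natDegree_eq hp hn, mul_one, one_mul, sub_self]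
  · rw [coeff_eq_zero_of_natDegree_lt (hn ▸ hlt), mul_zero, zero_mul, sub_self]

lemma degree_mul_C_lt {q : R[X]} {n : ℕ} (hq : q.degree < n) (a : R) :
    (q * C a).degree < n := by
  rw [degree_lt_iff_coeff_zero] at hq ⊢
  intro m hm
  rw [coeff_mul_C, hq m hm, zero_mul]

lemma exists_eq_sum_C_mul_of_degree_lt {P : ℕ → R[X]}
    (hP : ∀ k, (P k).Monic ∧ (P k).natDegree = k) {n : ℕ} {q : R[X]} (hq : q.degree < n) :
    ∃ A : ℕ → R, q = ∑ k ∈ Finset.range n, C (A k) * P k := by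
  induction n generalizing q with
  | zero =>
    refine ⟨0, ?_⟩
    simpa using hq
  | succ n ih =>
    have hlow : (q - C (q.coeff n) * P n).degree < n := by
      rw [degree_lt_iff_coeff_zero]
      intro m hm
      rw [coeff_sub, coeff_C_mul]
      rcases hm.eq_or_lt with rfl | hlt
      · rw [coeff_eq_one_of_monic_of_natDegree_eq (hP n).1 (hP n).2, mul_one, sub_self]
      · have hqm : q.coeff m = 0 := (degree_lt_iff_coeff_zero q _).1 hq m hlt
        have hPm : (P n).coeff m = 0 := coeff_eq_zero_of_natDegree_lt (by rwa [(hP n).2])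
        rw [hqm, hPm, mul_zero, sub_self]
    obtain ⟨A, hA⟩ := ih hlow
    refine ⟨Function.update A n (q.coeff n), ?_⟩
    rw [Finset.sum_range_succ, Function.update_self]
    rw [Finset.sum_congr rfl fun k hk => by
      rw [Function.update_of_ne (Finset.mem_range.1 hk).ne], ← hA, sub_add_cancel]

end Polynomial

lemma Matrix.mul_mul_conjTranspose_apply_self {n : Type*} [Fintype n] (A B : Matrix n n ℂ)
    (i : n) : (A * B * Aᴴ) i i = star (star (A i)) ⬝ᵥ B *ᵥ star (A i) := by
  simp only [star_star, Matrix.mul_apply, Matrix.conjTranspose_apply, dotProduct, mulVec,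
    Finset.mul_sum, Finset.sum_mul, Pi.star_apply, mul_assoc]
  exact Finset.sum_comm

section MonicOPS

variable {I : Type} [Fintype I] [DecidableEq I] {a b : ℝ} {W : ℝ → Matrix I I ℂ}
  {P : ℕ → Polynomial (Matrix I I ℂ)}

lemma polyInner_eq_zero_of_degree_lt (hW : ∀ i j, IntegrableOn (fun x => W x i j) (Set.Ioo a b))
    (hmon : ∀ n, (P n).Monic ∧ (P n).natDegree = n)
    (horth : ∀ n m, n ≠ m → polyInner (Set.Ioo a b) W (P n) (P m) = 0)
    {n : ℕ} {q : Polynomial (Matrix I I ℂ)} (hq : q.degree < n) :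
    polyInner (Set.Ioo a b) W (P n) q = 0 := by
  obtain ⟨A, rfl⟩ := exists_eq_sum_C_mul_of_degree_lt hmon hq
  rw [polyInner_finsetSum_right hW]
  refine Finset.sum_eq_zero fun k hk => ?_
  rw [polyInner_C_mul_right hW, horth n k (Finset.mem_range.1 hk).ne', zero_mul]

lemma eq_zero_of_polyInner_self_eq_zero (hab : a < b)
    (hpos : ∀ᵐ x ∂volume.restrict (Set.Ioo a b), (W x).PosDef)
    (hW : ∀ i j, IntegrableOn (fun x => W x i j) (Set.Ioo a b))
    {p : Polynomial (Matrix I I ℂ)} (h : polyInner (Set.Ioo a b) W p p = 0) : p = 0 := by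
  have hrows (i : I) : ∀ᵐ x ∂volume.restrict (Set.Ioo a b), star (polyEval p x i) = 0 := by
    have hint := integrableOn_polyInner_integrand hW p p i i
    have hzero := congrFun (congrFun h i) i
    simp only [polyInner, matIntegral_apply, Matrix.zero_apply,
      Matrix.mul_mul_conjTranspose_apply_self] at hint hzero
    exact ae_eq_zero_of_integral_dotProduct_mulVec_eq_zero hpos hint hzero
  have hentries : ∀ᵐ x ∂volume.restrict (Set.Ioo a b), ∀ i j, polyEval p x i j = 0 := by
    filter_upwards [ae_all_iff.2 hrows] with x hx i j
    simpa using congrFun (hx i) j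
  suffices matPolyEquiv.symm p = 0 by simpa using this
  refine Matrix.ext fun i j => eq_zero_of_ae_eval_eq_zero hab ?_
  filter_upwards [hentries] with x hx
  rw [← polyEval_apply, hx]

lemma commute_polyEval_of_ae_mul_eq (hab : a < b)
    (hpos : ∀ᵐ x ∂volume.restrict (Set.Ioo a b), (W x).PosDef)
    (hW : ∀ i j, IntegrableOn (fun x => W x i j) (Set.Ioo a b))
    (hmon : ∀ n, (P n).Monic ∧ (P n).natDegree = n)
    (horth : ∀ n m, n ≠ m → polyInner (Set.Ioo a b) W (P n) (P m) = 0) {T : Matrix I I ℂ}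
    (hT : ∀ᵐ x ∂volume.restrict (Set.Ioo a b), T * W x = W x * Tᴴ) (n : ℕ) (x : ℝ) :
    T * polyEval (P n) x = polyEval (P n) x * T := by
  set R := C T * P n - P n * C T
  have hR : R.degree < n := degree_C_mul_sub_mul_C_lt (hmon n).1 (hmon n).2 T
  have hRR : polyInner (Set.Ioo a b) W R R = 0 := by
    rw [polyInner_sub_left hW, polyInner_C_mul_left hW, polyInner_mul_C_of_ae hT,
      polyInner_eq_zero_of_degree_lt hW hmon horth hR,
      polyInner_eq_zero_of_degree_lt hW hmon horth (degree_mul_C_lt hR T), mul_zero, sub_zero]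
  have hR0 := congrArg (polyEval · x) (eq_zero_of_polyInner_self_eq_zero hab hpos hW hRR)
  simpa [R, sub_eq_zero] using hR0

lemma ae_mul_eq_of_commute_polyEval (hW : ∀ i j, IntegrableOn (fun x => W x i j) (Set.Ioo a b))
    (hmon : ∀ n, (P n).Monic ∧ (P n).natDegree = n)
    (horth : ∀ n m, n ≠ m → polyInner (Set.Ioo a b) W (P n) (P m) = 0) {T : Matrix I I ℂ}
    (hM : T * matIntegral (Set.Ioo a b) W = matIntegral (Set.Ioo a b) W * Tᴴ)
    (hc : ∀ n x, T * polyEval (P n) x = polyEval (P n) x * T) :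
    ∀ᵐ x ∂volume.restrict (Set.Ioo a b), T * W x = W x * Tᴴ := by
  have hP0 : P 0 = 1 := (hmon 0).1.natDegree_eq_zero.1 (hmon 0).2
  have hbasis (l : ℕ) :
      polyInner (Set.Ioo a b) W (P l * C T) 1 = polyInner (Set.Ioo a b) W (P l) (C T) := by
    rw [polyInner_mul_C_of_commute hW (hc l)]
    conv_rhs => rw [← mul_one (C T), polyInner_C_mul_right hW]
    rcases eq_or_ne l 0 with rfl | hl
    · simpa [hP0, polyInner] using hM
    · rw [← hP0, horth l 0 hl, mul_zero, zero_mul]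
  have hmoment (k : ℕ) : polyInner (Set.Ioo a b) W (monomial k 1 * C T) 1 =
      polyInner (Set.Ioo a b) W (monomial k 1) (C T) := by
    obtain ⟨A, hA⟩ := exists_eq_sum_C_mul_of_degree_lt hmon
      ((degree_monomial_le k 1).trans_lt (by exact_mod_cast k.lt_succ_self))
    simp only [hA, Finset.sum_mul, polyInner_finsetSum_left hW, mul_assoc,
      polyInner_C_mul_left hW, hbasis]
  set F := fun x => T * W x - W x * Tᴴ
  have hF (i j : I) : IntegrableOn (fun x => F x i j) (Set.Ioo a b) := by
    have hTW := integrableOn_mul_mul_apply hW (continuous_const (y := T))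
      (continuous_const (y := 1)) i j
    have hWT := integrableOn_mul_mul_apply hW (continuous_const (y := 1))
      (continuous_const (y := Tᴴ)) i j
    simp only [mul_one, one_mul] at hTW hWT
    exact hTW.sub hWT
  have hFmom (k : ℕ) (i j : I) : ∫ x in Set.Ioo a b, x ^ k • F x i j = 0 := by
    have h := congrFun (congrFun (hmoment k) i) j
    simp only [polyInner, matIntegral_apply] at h
    rw [← sub_eq_zero, ← integral_sub (integrableOn_polyInner_integrand hW _ _ i j)
      (integrableOn_polyInner_integrand hW _ _ i j)] at h
    simpa [F, mul_sub, Complex.real_smul] using h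
  have hF0 (i j : I) := ae_eq_zero_of_forall_moment_eq_zero (hF i j) (hFmom · i j)
  filter_upwards [ae_all_iff.2 fun i => ae_all_iff.2 (hF0 i)] with x hx
  exact sub_eq_zero.1 (Matrix.ext hx)

end MonicOPS

lemma weightSupport_coe (a b : ℝ) : weightSupport (a : EReal) (b : EReal) = Set.Ioo a b := by
  ext x
  simp [weightSupport, EReal.coe_lt_coe_iff]

/-- For a matrix weight `W` on a finite interval with monic orthogonal
polynomials `{P n}` and zeroth moment `M₀`, the set `C_ℝ(W)` coincides with
`{T : T M₀ = M₀ T* and T Pₙ(x) = Pₙ(x) T for all n, x}`. -/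
theorem stmt_12 {N : ℕ} (a b : ℝ) (W : ℝ → Matrix (Fin N) (Fin N) ℂ)
    (hW : IsMatrixWeight (a : EReal) (b : EReal) W)
    (P : ℕ → Polynomial (Matrix (Fin N) (Fin N) ℂ))
    (hP : IsMonicOPS (a : EReal) (b : EReal) W P) :
    CR (a : EReal) (b : EReal) W =
      {T : Matrix (Fin N) (Fin N) ℂ |
        T * matIntegral (weightSupport (a : EReal) (b : EReal)) W =
          matIntegral (weightSupport (a : EReal) (b : EReal)) W * Tᴴ ∧
        ∀ n : ℕ, ∀ x : ℝ, T * polyEval (P n) x = polyEval (P n) x * T} := by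
  obtain ⟨hab, -, hpos, hmom⟩ := hW
  obtain ⟨hmon, horth⟩ := hP
  simp only [weightSupport_coe] at hpos hmom horth ⊢
  have hW0 (i j : Fin N) : IntegrableOn (fun x => W x i j) (Set.Ioo a b) := by
    simpa using hmom 0 i j
  ext T
  simp only [CR, weightSupport_coe, Set.mem_ofPred_eq]
  refine ⟨fun hT => ⟨?_, commute_polyEval_of_ae_mul_eq (EReal.coe_lt_coe_iff.1 hab) hpos hW0
    hmon horth hT⟩, fun ⟨hM, hc⟩ => ae_mul_eq_of_commute_polyEval hW0 hmon horth hM hc⟩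
  rw [← matIntegral_const_mul hW0, ← matIntegral_mul_const hW0]
  exact matIntegral_congr_ae hT
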